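/- Let γ be a C¹ symmetric positive-definite matrix field on open X ⊂ ℝⁿ, u₁,…,uₙ solutions of ∇·(γ∇u)=0 with pointwise linearly independent gradients, H the matrix with columns γ∇uⱼ, u_{n+k} an additional solution with decomposition coefficients μₖⁱ and Zₖ the matrix with columns ∇μₖⁱ. Then at each point, the matrix γ̃·Zₖ·Hᵀ is symmetric, where γ̃ = (det γ)^{-1/n}·γ (equivalently, γ·Zₖ·Hᵀ is symmetric). -/

import Mathlib

/-!
Differentiating `∇w = Σᵢ μᵢ ∇uᵢ` in the direction `eₗ` and comparing the `(k, l)` and `(l, k)`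
components, the Hessian terms cancel by symmetry of second derivatives (this is `d(dw) = 0`), leaving
`Σᵢ ∂ₗμᵢ ∂ₖuᵢ = Σᵢ ∂ₖμᵢ ∂ₗuᵢ`: the matrix `Z (∇u)ᵀ` is symmetric. Since `H = γ ∇u` and `γ` is
symmetric, `γ Z Hᵀ = γ (Z (∇u)ᵀ) γᵀ` is a congruence of a symmetric matrix, and scalar multiples of
symmetric matrices are symmetric.
-/

open Matrix

/-- Partial derivative in the `i`-th coordinate direction. -/
noncomputable def pd {n : ℕ} (i : Fin n) (f : (Fin n → ℝ) → ℝ)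
    (x : Fin n → ℝ) : ℝ :=
  fderiv ℝ f x (Pi.single i 1)

open Filter Topology

theorem Matrix.IsSymm.mul_mul_transpose_same {m n R : Type*} [Fintype n] [CommSemiring R]
    {B : Matrix n n R} (hB : B.IsSymm) (A : Matrix m n R) : (A * B * Aᵀ).IsSymm := by
  simp only [IsSymm, transpose_mul, transpose_transpose, hB.eq, Matrix.mul_assoc]

section PartialDerivatives

variable {n : ℕ} {x : Fin n → ℝ}

theorem Filter.EventuallyEq.pd_eq {f g : (Fin n → ℝ) → ℝ} (h : f =ᶠ[𝓝 x] g) (k : Fin n) :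
    pd k f x = pd k g x := by
  rw [pd, pd, h.fderiv_eq]

theorem pd_mul {a b : (Fin n → ℝ) → ℝ} (ha : DifferentiableAt ℝ a x)
    (hb : DifferentiableAt ℝ b x) (k : Fin n) :
    pd k (fun y => a y * b y) x = pd k a x * b x + a x * pd k b x := by
  simp only [pd, fderiv_fun_mul ha hb, _root_.add_apply, _root_.smul_apply, smul_eq_mul]
  ring

theorem pd_sum {ι : Type*} (t : Finset ι) {f : ι → (Fin n → ℝ) → ℝ}
    (hf : ∀ i ∈ t, DifferentiableAt ℝ (f i) x) (k : Fin n) :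
    pd k (fun y => ∑ i ∈ t, f i y) x = ∑ i ∈ t, pd k (f i) x := by
  simp only [pd, fderiv_fun_sum hf, _root_.sum_apply]

theorem pd_pd_eq_fderiv_fderiv {f : (Fin n → ℝ) → ℝ} (hf : ContDiffAt ℝ 2 f x) (l k : Fin n) :
    pd l (pd k f) x = fderiv ℝ (fderiv ℝ f) x (Pi.single l 1) (Pi.single k 1) := by
  have hd : DifferentiableAt ℝ (fderiv ℝ f) x :=
    (hf.fderiv_right (m := 1) le_rfl).differentiableAt one_ne_zero
  have h : HasFDerivAt (pd k f)
      ((ContinuousLinearMap.apply ℝ ℝ (Pi.single k 1)).comp (fderiv ℝ (fderiv ℝ f) x)) x := by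
    exact (ContinuousLinearMap.apply ℝ ℝ (Pi.single k 1)).hasFDerivAt.comp x hd.hasFDerivAt
  simp [pd, h.fderiv]

theorem ContDiffAt.differentiableAt_pd {f : (Fin n → ℝ) → ℝ} (hf : ContDiffAt ℝ 2 f x)
    (k : Fin n) : DifferentiableAt ℝ (pd k f) x :=
  ((hf.fderiv_right (m := 1) le_rfl).differentiableAt one_ne_zero).clm_apply
    (differentiableAt_const _)

theorem pd_pd_comm {f : (Fin n → ℝ) → ℝ} (hf : ContDiffAt ℝ 2 f x) (l k : Fin n) :
    pd l (pd k f) x = pd k (pd l f) x := by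
  rw [pd_pd_eq_fderiv_fderiv hf, pd_pd_eq_fderiv_fderiv hf]
  exact hf.isSymmSndFDerivAt (by norm_num) _ _

end PartialDerivatives

noncomputable def gradMatrix {n : ℕ} {ι : Type*} (f : ι → (Fin n → ℝ) → ℝ) (x : Fin n → ℝ) :
    Matrix (Fin n) ι ℝ :=
  of fun k i => pd k (f i) x

theorem isSymm_gradMatrix_mul_transpose_of_pd_eq_sum {n : ℕ} {ι : Type*} [Fintype ι]
    {x : Fin n → ℝ} {w : (Fin n → ℝ) → ℝ} {u μ : ι → (Fin n → ℝ) → ℝ}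
    (hw : ContDiffAt ℝ 2 w x) (hu : ∀ i, ContDiffAt ℝ 2 (u i) x)
    (hμ : ∀ i, DifferentiableAt ℝ (μ i) x)
    (hdecomp : ∀ᶠ y in 𝓝 x, ∀ k, pd k w y = ∑ i, μ i y * pd k (u i) y) :
    (gradMatrix μ x * (gradMatrix u x)ᵀ).IsSymm := by
  have hessian : ∀ l k, pd l (pd k w) x =
      ∑ i, pd l (μ i) x * pd k (u i) x + ∑ i, μ i x * pd l (pd k (u i)) x := by
    intro l k
    have hk : pd k w =ᶠ[𝓝 x] fun y => ∑ i, μ i y * pd k (u i) y :=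
      hdecomp.mono fun y hy => hy k
    rw [hk.pd_eq, pd_sum (f := fun i y => μ i y * pd k (u i) y) _
      fun i _ => (hμ i).mul ((hu i).differentiableAt_pd k), ← Finset.sum_add_distrib]
    exact Finset.sum_congr rfl fun i _ => pd_mul (hμ i) ((hu i).differentiableAt_pd k) l
  refine IsSymm.ext fun l k => ?_
  simp only [gradMatrix, mul_apply, transpose_apply, of_apply]
  have h := hessian l k
  rw [pd_pd_comm hw, hessian k l] at h
  simp only [pd_pd_comm (hu _) l k] at h
  exact add_right_cancel h

theorem stmt_17_general {n : ℕ} (s : Set (Fin n → ℝ)) (hs : IsOpen s)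
    (γ : (Fin n → ℝ) → Matrix (Fin n) (Fin n) ℝ)
    (hγsymm : ∀ x ∈ s, (γ x).IsSymm)
    (u : Fin n → (Fin n → ℝ) → ℝ) (hu : ∀ j, ContDiffOn ℝ 2 (u j) s)
    -- `w = u_{n+k}` is an additional solution, with C¹ decomposition
    -- coefficients μ: ∇w = Σᵢ μᵢ ∇uᵢ
    (w : (Fin n → ℝ) → ℝ) (hw : ContDiffOn ℝ 2 w s)
    (μ : Fin n → (Fin n → ℝ) → ℝ) (hμ : ∀ i, ContDiffOn ℝ 1 (μ i) s)
    (hdecomp : ∀ x ∈ s, ∀ k : Fin n, pd k w x = ∑ i, μ i x * pd k (u i) x)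
    (H Z : (Fin n → ℝ) → Matrix (Fin n) (Fin n) ℝ)
    (hH : ∀ x, H x = γ x * Matrix.of fun k i : Fin n => pd k (u i) x)
    (hZ : ∀ x, Z x = Matrix.of fun k i : Fin n => pd k (μ i) x) :
    ∀ x ∈ s,
      (Real.rpow ((γ x).det) (-(1 : ℝ) / n) • (γ x * Z x * (H x)ᵀ)).IsSymm ∧
        (γ x * Z x * (H x)ᵀ).IsSymm := by
  intro x hx
  have hxs : s ∈ 𝓝 x := hs.mem_nhds hx
  have hcurl : (gradMatrix μ x * (gradMatrix u x)ᵀ).IsSymm :=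
    isSymm_gradMatrix_mul_transpose_of_pd_eq_sum ((hw x hx).contDiffAt hxs)
      (fun i => (hu i x hx).contDiffAt hxs)
      (fun i => ((hμ i x hx).contDiffAt hxs).differentiableAt one_ne_zero)
      (eventually_of_mem hxs hdecomp)
  have hsymm : (γ x * Z x * (H x)ᵀ).IsSymm := by
    convert hcurl.mul_mul_transpose_same (γ x) using 1
    rw [hH, hZ, transpose_mul, (hγsymm x hx).eq]
    simp only [gradMatrix, Matrix.mul_assoc]
  exact ⟨hsymm.smul _, hsymm⟩

theorem stmt_17 {n : ℕ} (hn : 0 < n) (s : Set (Fin n → ℝ)) (hs : IsOpen s)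
    (γ : (Fin n → ℝ) → Matrix (Fin n) (Fin n) ℝ)
    (hγreg : ∀ i j : Fin n, ContDiffOn ℝ 1 (fun x => γ x i j) s)
    (hγpd : ∀ x ∈ s, (γ x).PosDef) (hγsymm : ∀ x ∈ s, (γ x).IsSymm)
    (u : Fin n → (Fin n → ℝ) → ℝ) (hu : ∀ j, ContDiffOn ℝ 2 (u j) s)
    -- the uⱼ solve the conductivity equation ∇·(γ∇uⱼ) = 0 on s
    (hsol : ∀ j, ∀ x ∈ s,
      ∑ k, pd k (fun y => ∑ l, γ y k l * pd l (u j) y) x = 0)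
    -- the gradients ∇u₁, …, ∇uₙ are linearly independent at each point of s
    (hbasis : ∀ x ∈ s, IsUnit (Matrix.of fun k i : Fin n => pd k (u i) x).det)
    -- `w = u_{n+k}` is an additional solution, with C¹ decomposition
    -- coefficients μ: ∇w = Σᵢ μᵢ ∇uᵢ
    (w : (Fin n → ℝ) → ℝ) (hw : ContDiffOn ℝ 2 w s)
    (hwsol : ∀ x ∈ s, ∑ k, pd k (fun y => ∑ l, γ y k l * pd l w y) x = 0)
    (μ : Fin n → (Fin n → ℝ) → ℝ) (hμ : ∀ i, ContDiffOn ℝ 1 (μ i) s)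
    (hdecomp : ∀ x ∈ s, ∀ k : Fin n, pd k w x = ∑ i, μ i x * pd k (u i) x)
    (H Z : (Fin n → ℝ) → Matrix (Fin n) (Fin n) ℝ)
    (hH : ∀ x, H x = γ x * Matrix.of fun k i : Fin n => pd k (u i) x)
    (hZ : ∀ x, Z x = Matrix.of fun k i : Fin n => pd k (μ i) x) :
    ∀ x ∈ s,
      (Real.rpow ((γ x).det) (-(1 : ℝ) / n) • (γ x * Z x * (H x)ᵀ)).IsSymm ∧
        (γ x * Z x * (H x)ᵀ).IsSymm :=
  stmt_17_general s hs γ hγsymm u hu w hw μ hμ hdecomp H Z hH hZ
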